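/- For d ≥ 1, the boundary of the (d+1)-dimensional cross-polytope is the unique non-d-collapsible flag complex on fewer than 2d+3 vertices; in particular every flag complex on at most 2d+1 vertices is d-collapsible. -/

import Mathlib

/-- An abstract simplicial complex on vertex type `V`: a family of nonempty
finite sets closed under passing to nonempty subsets. -/
structure AbsComplex (V : Type*) where
  faces : Set (Finset V)
  nonempty_mem : ∀ ⦃σ⦄, σ ∈ faces → σ.Nonempty
  down_closed : ∀ ⦃σ τ : Finset V⦄, σ ∈ faces → τ ⊆ σ → τ.Nonempty → τ ∈ faces

/-- The clique (flag) complex of a graph: faces are the nonempty cliques. -/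
def cliqueComplex {V : Type*} (G : SimpleGraph V) : AbsComplex V where
  faces := {σ | σ.Nonempty ∧ G.IsClique σ}
  nonempty_mem := fun _ h => h.1
  down_closed := fun _ _ h hsub hne => ⟨hne, h.2.subset (Finset.coe_subset.mpr hsub)⟩

/-- `σ` is a free face with unique proper coface `τ`. -/
def IsFreeFace {V : Type*} (X : AbsComplex V) (σ τ : Finset V) : Prop :=
  σ ∈ X.faces ∧ τ ∈ X.faces ∧ σ ⊂ τ ∧ ∀ ρ ∈ X.faces, σ ⊂ ρ → ρ = τ

/-- An elementary collapse: remove a free face together with its unique proper coface. -/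
def CollapseStep {V : Type*} (X Y : AbsComplex V) : Prop :=
  ∃ σ τ, IsFreeFace X σ τ ∧ Y.faces = X.faces \ {σ, τ}

/-- `X` is `d`-collapsible: some sequence of elementary collapses removes all
faces of dimension at least `d` (i.e. of cardinality at least `d + 1`). -/
def Collapsible {V : Type*} (d : ℕ) (X : AbsComplex V) : Prop :=
  ∃ Y : AbsComplex V, Relation.ReflTransGen CollapseStep X Y ∧ ∀ σ ∈ Y.faces, σ.card ≤ d

/-- The 1-skeleton of the boundary of the `(d+1)`-dimensional cross-polytope:
the complete `(d+1)`-partite graph with all parts of size 2. -/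
def crossGraph (d : ℕ) : SimpleGraph (Fin (d + 1) × Fin 2) where
  Adj u v := u.1 ≠ v.1
  symm := ⟨fun _ _ h => h.symm⟩
  loopless := ⟨fun _ h => h rfl⟩

/-!
Call an elementary collapse *large* (`CollapseStepGE d`) if its free face has at least `d`
vertices. Large collapses of a subcomplex remain collapses after adding faces with at most `d`
vertices, and large collapses of the link of `v` lift to large collapses, one dimension higher, of
the star of `v`.

By induction on `d` and on `S`, the flag complex of `G[S]` with `|S| ≤ 2d + 2` collapses by large
collapses to dimension `< d`, unless `|S| = 2d + 2` and every vertex has exactly one non-neighbour.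
A vertex adjacent to all others makes the complex a cone, which collapses. A vertex `v` with two
non-neighbours has at most `2d - 1` neighbours, so its link, the flag complex of its neighbourhood,
collapses to dimension `< d - 1` (for `d = 1` it is at most a point, and the edge at the leaf `v`
is collapsed directly), and then the deletion of `v` collapses by induction. Otherwise
non-adjacency pairs up the vertices, so cliques have at most `|S| / 2` vertices, and for
`|S| = 2d + 2` the graph is the cross-polytope graph.
-/

attribute [ext] AbsComplex

lemma Finset.insert_ssubset_insert_iff_of_notMem {α : Type*} [DecidableEq α] {a : α}
    {s t : Finset α} (hs : a ∉ s) (ht : a ∉ t) : insert a s ⊂ insert a t ↔ s ⊂ t := by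
  simp only [ssubset_iff_subset_not_subset, Finset.insert_subset_insert_iff hs,
    Finset.insert_subset_insert_iff ht]

namespace AbsComplex

variable {V : Type*} [DecidableEq V]

def link (X : AbsComplex V) (v : V) : AbsComplex V where
  faces := {σ | v ∉ σ ∧ σ.Nonempty ∧ insert v σ ∈ X.faces}
  nonempty_mem := fun _ h => h.2.1
  down_closed := fun _ _ hσ hτσ hτ =>
    ⟨fun hv => hσ.1 (hτσ hv), hτ, X.down_closed hσ.2.2 (Finset.insert_subset_insert v hτσ)
      (Finset.insert_nonempty v _)⟩

def deletion (X : AbsComplex V) (v : V) : AbsComplex V where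
  faces := {σ ∈ X.faces | v ∉ σ}
  nonempty_mem := fun _ h => X.nonempty_mem h.1
  down_closed := fun _ _ hσ hτσ hτ => ⟨X.down_closed hσ.1 hτσ hτ, fun hv => hσ.2 (hτσ hv)⟩

lemma erase_mem_link {X : AbsComplex V} {v : V} {ρ : Finset V} (hρ : ρ ∈ X.faces) (hv : v ∈ ρ)
    (hne : (ρ.erase v).Nonempty) : ρ.erase v ∈ (X.link v).faces :=
  ⟨Finset.notMem_erase v ρ, hne, by rwa [Finset.insert_erase hv]⟩

end AbsComplex

namespace IsFreeFace

variable {V : Type*} {X : AbsComplex V} {σ τ : Finset V}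

def collapse (h : IsFreeFace X σ τ) : AbsComplex V where
  faces := X.faces \ {σ, τ}
  nonempty_mem := fun _ hρ => X.nonempty_mem hρ.1
  down_closed := by
    rintro μ ν ⟨hμ, hμστ⟩ hνμ hν
    refine ⟨X.down_closed hμ hνμ hν, ?_⟩
    rintro (rfl | rfl)
    · obtain rfl | hne := eq_or_ne μ ν
      · exact hμστ (Or.inl rfl)
      · exact hμστ (Or.inr (h.2.2.2 μ hμ (hνμ.ssubset_of_ne hne.symm)))
    · exact hμστ (Or.inr (h.2.2.2 μ hμ (h.2.2.1.trans_le hνμ)))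

@[simp]
lemma collapse_faces (h : IsFreeFace X σ τ) : h.collapse.faces = X.faces \ {σ, τ} := rfl

lemma collapse_faces_ssubset (h : IsFreeFace X σ τ) : h.collapse.faces ⊂ X.faces :=
  Set.sdiff_ssubset_left_iff.mpr ⟨σ, h.1, Set.mem_insert σ _⟩

end IsFreeFace

section CollapseGE

variable {V : Type*}

def CollapseStepGE (d : ℕ) (X Y : AbsComplex V) : Prop :=
  ∃ σ τ, IsFreeFace X σ τ ∧ d ≤ σ.card ∧ Y.faces = X.faces \ {σ, τ}

abbrev CollapsesGE (d : ℕ) : AbsComplex V → AbsComplex V → Prop :=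
  Relation.ReflTransGen (CollapseStepGE d)

def CollapsibleGE (d : ℕ) (X : AbsComplex V) : Prop :=
  ∃ Y, CollapsesGE d X Y ∧ ∀ σ ∈ Y.faces, σ.card ≤ d

variable {d : ℕ} {X Y : AbsComplex V}

lemma IsFreeFace.collapseStepGE {σ τ : Finset V} (h : IsFreeFace X σ τ) (hσ : d ≤ σ.card) :
    CollapseStepGE d X h.collapse :=
  ⟨σ, τ, h, hσ, rfl⟩

lemma CollapseStepGE.faces_subset (h : CollapseStepGE d X Y) : Y.faces ⊆ X.faces := by
  obtain ⟨σ, τ, -, -, hY⟩ := h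
  exact hY ▸ Set.sdiff_subset

lemma CollapsesGE.faces_subset (h : CollapsesGE d X Y) : Y.faces ⊆ X.faces := by
  induction h with
  | refl => exact subset_rfl
  | tail _ hstep ih => exact hstep.faces_subset.trans ih

lemma collapsibleGE_of_forall_card_le (h : ∀ σ ∈ X.faces, σ.card ≤ d) : CollapsibleGE d X :=
  ⟨X, .refl, h⟩

lemma CollapsesGE.collapsibleGE (h : CollapsesGE d X Y) (hY : CollapsibleGE d Y) :
    CollapsibleGE d X :=
  let ⟨Z, hYZ, hZ⟩ := hY
  ⟨Z, h.trans hYZ, hZ⟩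

lemma CollapseStepGE.collapsibleGE (h : CollapseStepGE d X Y) (hY : CollapsibleGE d Y) :
    CollapsibleGE d X :=
  CollapsesGE.collapsibleGE (.single h) hY

lemma CollapsibleGE.collapsible (h : CollapsibleGE d X) : Collapsible d X := by
  obtain ⟨Y, hXY, hY⟩ := h
  exact ⟨Y, Relation.ReflTransGen.mono (fun _ _ ⟨σ, τ, hfree, _, hfaces⟩ => ⟨σ, τ, hfree, hfaces⟩)
    X Y hXY, hY⟩

end CollapseGE

section Extension

variable {V : Type*} {d : ℕ} {A A' X : AbsComplex V} {E : Set (Finset V)}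

lemma CollapseStepGE.union (h : CollapseStepGE d A A') (hX : X.faces = A.faces ∪ E)
    (hAE : Disjoint A.faces E) (hE : ∀ ρ ∈ E, ρ.card ≤ d) :
    ∃ X', CollapseStepGE d X X' ∧ X'.faces = A'.faces ∪ E := by
  obtain ⟨σ, τ, ⟨hσ, hτ, hστ, huniq⟩, hσd, hA'⟩ := h
  have hfree : IsFreeFace X σ τ := by
    refine ⟨hX ▸ Or.inl hσ, hX ▸ Or.inl hτ, hστ, fun ρ hρ hσρ => ?_⟩
    rcases hX ▸ hρ with hρ | hρ
    · exact huniq ρ hρ hσρ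
    · have := Finset.card_lt_card hσρ
      have := hE ρ hρ
      omega
  refine ⟨hfree.collapse, hfree.collapseStepGE hσd, ?_⟩
  have hστE : Disjoint E {σ, τ} := by
    simp [Set.disjoint_left.mp hAE hσ, Set.disjoint_left.mp hAE hτ]
  rw [hfree.collapse_faces, hX, hA', Set.union_sdiff_distrib, hστE.sdiff_eq_left]

lemma CollapsesGE.union (h : CollapsesGE d A A') (hX : X.faces = A.faces ∪ E)
    (hAE : Disjoint A.faces E) (hE : ∀ ρ ∈ E, ρ.card ≤ d) :
    ∃ X', CollapsesGE d X X' ∧ X'.faces = A'.faces ∪ E := by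
  induction h with
  | refl => exact ⟨X, .refl, hX⟩
  | tail hAB hstep ih =>
    obtain ⟨X₁, hXX₁, hX₁⟩ := ih
    obtain ⟨X₂, hX₁X₂, hX₂⟩ := hstep.union hX₁ (hAE.mono_left (CollapsesGE.faces_subset hAB)) hE
    exact ⟨X₂, hXX₁.tail hX₁X₂, hX₂⟩

lemma CollapsibleGE.of_union (hA : CollapsibleGE d A) (hX : X.faces = A.faces ∪ E)
    (hAE : Disjoint A.faces E) (hE : ∀ ρ ∈ E, ρ.card ≤ d) : CollapsibleGE d X := by
  obtain ⟨A', hAA', hA'⟩ := hA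
  obtain ⟨X', hXX', hX'⟩ := hAA'.union hX hAE hE
  refine ⟨X', hXX', ?_⟩
  rw [hX']
  rintro σ (hσ | hσ)
  exacts [hA' σ hσ, hE σ hσ]

end Extension

section Link

variable {V : Type*} [DecidableEq V] {c : ℕ} {X : AbsComplex V} {v : V}

lemma CollapseStepGE.lift_link {L' : AbsComplex V} (h : CollapseStepGE c (X.link v) L') :
    ∃ X', CollapseStepGE (c + 1) X X' ∧ X'.link v = L' ∧ X'.deletion v = X.deletion v := by
  obtain ⟨σ, τ, ⟨hσ, hτ, hστ, huniq⟩, hσc, hL'⟩ := h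
  have hfree : IsFreeFace X (insert v σ) (insert v τ) := by
    refine ⟨hσ.2.2, hτ.2.2, (Finset.insert_ssubset_insert_iff_of_notMem hσ.1 hτ.1).mpr hστ,
      fun ρ hρ hσρ => ?_⟩
    have hvρ : v ∈ ρ := hσρ.subset (Finset.mem_insert_self v σ)
    rw [← Finset.insert_erase hvρ] at hσρ ⊢
    have hσμ := (Finset.insert_ssubset_insert_iff_of_notMem hσ.1 (Finset.notMem_erase v ρ)).mp hσρ
    rw [huniq _ (AbsComplex.erase_mem_link hρ hvρ (hσ.2.1.mono hσμ.subset)) hσμ]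
  refine ⟨hfree.collapse, hfree.collapseStepGE (by rw [Finset.card_insert_of_notMem hσ.1]; omega),
    ?_, ?_⟩
  · ext μ
    have key : ∀ ν, v ∉ μ → v ∉ ν → (insert v μ = insert v ν ↔ μ = ν) := fun ν hμ hν =>
      Finset.insert_erase_invOn.2.injOn.eq_iff hμ hν
    simp only [AbsComplex.link, hL', IsFreeFace.collapse_faces, Set.mem_sdiff, Set.mem_ofPred_eq,
      Set.mem_insert_iff, Set.mem_singleton_iff]
    by_cases hμ : v ∉ μ
    · simp only [key σ hμ hσ.1, key τ hμ hτ.1]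
      tauto
    · tauto
  · ext ρ
    simp only [AbsComplex.deletion, IsFreeFace.collapse_faces, Set.mem_ofPred_eq, Set.mem_sdiff,
      Set.mem_insert_iff, Set.mem_singleton_iff]
    constructor
    · exact fun ⟨⟨hρ, _⟩, hvρ⟩ => ⟨hρ, hvρ⟩
    · rintro ⟨hρ, hvρ⟩
      refine ⟨⟨hρ, ?_⟩, hvρ⟩
      rintro (rfl | rfl) <;> exact hvρ (Finset.mem_insert_self _ _)

lemma CollapsesGE.lift_link {L' : AbsComplex V} (h : CollapsesGE c (X.link v) L') :
    ∃ X', CollapsesGE (c + 1) X X' ∧ X'.link v = L' ∧ X'.deletion v = X.deletion v := by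
  induction h with
  | refl => exact ⟨X, .refl, rfl, rfl⟩
  | tail _ hstep ih =>
    obtain ⟨X₁, hXX₁, hlink₁, hdel₁⟩ := ih
    obtain ⟨X₂, hX₁X₂, hlink₂, hdel₂⟩ := (hlink₁ ▸ hstep).lift_link
    exact ⟨X₂, hXX₁.tail hX₁X₂, hlink₂, hdel₂.trans hdel₁⟩

theorem collapsibleGE_succ_of_link (hdel : CollapsibleGE (c + 1) (X.deletion v))
    (hlink : CollapsibleGE c (X.link v)) : CollapsibleGE (c + 1) X := by
  obtain ⟨L', hL, hL'⟩ := hlink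
  obtain ⟨X', hXX', hlink', hdel'⟩ := hL.lift_link
  rw [← hdel'] at hdel
  refine hXX'.collapsibleGE (hdel.of_union (E := {ρ ∈ X'.faces | v ∈ ρ}) ?_ ?_ ?_)
  · ext ρ
    simp only [AbsComplex.deletion, Set.mem_union, Set.mem_ofPred_eq]
    tauto
  · exact Set.disjoint_left.mpr fun ρ h₁ h₂ => h₁.2 h₂.2
  · rintro ρ ⟨hρ, hvρ⟩
    rw [← Finset.card_erase_add_one hvρ]
    obtain he | hne := (ρ.erase v).eq_empty_or_nonempty
    · simp [he]
    · have := hL' _ (hlink' ▸ AbsComplex.erase_mem_link hρ hvρ hne)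
      omega

lemma collapseStepGE_deletion_of_link_eq_singleton {w : V} (h : (X.link v).faces = {{w}}) :
    CollapseStepGE 1 X (X.deletion v) := by
  obtain ⟨hvw, -, hvwX⟩ : {w} ∈ (X.link v).faces := h ▸ rfl
  have hstar : ∀ ρ ∈ X.faces, v ∈ ρ → ρ = {v} ∨ ρ = insert v {w} := by
    intro ρ hρ hvρ
    obtain he | hne := (ρ.erase v).eq_empty_or_nonempty
    · left
      rw [Finset.erase_eq_empty_iff] at he
      exact he.resolve_left (Finset.ne_empty_of_mem hvρ)
    · right
      have hw : ρ.erase v ∈ ({{w}} : Set (Finset V)) := h ▸ AbsComplex.erase_mem_link hρ hvρ hne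
      rw [← Finset.insert_erase hvρ, Set.mem_singleton_iff.mp hw]
  have hfree : IsFreeFace X {v} (insert v {w}) :=
    ⟨X.down_closed hvwX (by simp) (by simp), hvwX,
      by rw [Finset.pair_comm]; exact Finset.ssubset_insert (by simpa [eq_comm] using hvw),
      fun ρ hρ hvρ => (hstar ρ hρ (hvρ.subset (Finset.mem_singleton_self v))).resolve_left hvρ.ne'⟩
  refine ⟨{v}, insert v {w}, hfree, le_rfl, ?_⟩
  ext ρ
  simp only [AbsComplex.deletion, Set.mem_ofPred_eq, Set.mem_sdiff, Set.mem_insert_iff,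
    Set.mem_singleton_iff]
  constructor
  · rintro ⟨hρ, hvρ⟩
    refine ⟨hρ, ?_⟩
    rintro (rfl | rfl) <;> simp at hvρ
  · rintro ⟨hρ, hne⟩
    exact ⟨hρ, fun hvρ => hne (hstar ρ hρ hvρ)⟩

end Link

section Cone

variable {V : Type*} [DecidableEq V] {d : ℕ} {X : AbsComplex V} {w : V}

def AbsComplex.IsCone (X : AbsComplex V) (w : V) : Prop :=
  ∀ σ ∈ X.faces, insert w σ ∈ X.faces

lemma AbsComplex.card_le_of_deletion (hd : 1 ≤ d)
    (h : ∀ σ ∈ (X.deletion w).faces, σ.card < d) : ∀ σ ∈ X.faces, σ.card ≤ d := by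
  intro σ hσ
  by_cases hw : w ∈ σ
  · rw [← Finset.card_erase_add_one hw]
    obtain he | hne := (σ.erase w).eq_empty_or_nonempty
    · simpa [he] using hd
    · exact h _ ⟨X.down_closed hσ (Finset.erase_subset w σ) hne, Finset.notMem_erase w σ⟩
  · exact (h σ ⟨hσ, hw⟩).le

lemma AbsComplex.IsCone.isFreeFace {σ : Finset V} (hX : X.IsCone w) (hσ : σ ∈ (X.deletion w).faces)
    (hmax : ∀ ρ ∈ (X.deletion w).faces, ρ.card ≤ σ.card) : IsFreeFace X σ (insert w σ) := by
  refine ⟨hσ.1, hX σ hσ.1, Finset.ssubset_insert hσ.2, fun ρ hρ hσρ => ?_⟩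
  by_cases hwρ : w ∈ ρ
  · have hσμ : σ ⊆ ρ.erase w :=
      (Finset.subset_insert_iff_of_notMem hσ.2).mp
        (by rw [Finset.insert_erase hwρ]; exact hσρ.subset)
    have hμ : ρ.erase w ∈ (X.deletion w).faces :=
      ⟨X.down_closed hρ (Finset.erase_subset w ρ) ((X.nonempty_mem hσ.1).mono hσμ),
        Finset.notMem_erase w ρ⟩
    rw [← Finset.insert_erase hwρ, Finset.eq_of_subset_of_card_le hσμ (hmax _ hμ)]
  · exact absurd (hmax ρ ⟨hρ, hwρ⟩) (Finset.card_lt_card hσρ).not_ge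

lemma AbsComplex.IsCone.collapse {σ : Finset V} (hX : X.IsCone w) (hw : w ∉ σ)
    (h : IsFreeFace X σ (insert w σ)) : h.collapse.IsCone w := by
  rintro ρ ⟨hρ, hρστ⟩
  refine ⟨hX ρ hρ, ?_⟩
  rintro (h₁ | h₁)
  · exact hw (h₁ ▸ Finset.mem_insert_self w ρ)
  · by_cases hwρ : w ∈ ρ
    · rw [Finset.insert_eq_of_mem hwρ] at h₁
      exact hρστ (Or.inr h₁)
    · exact hρστ (Or.inl (Finset.insert_erase_invOn.2.injOn hwρ hw h₁))

theorem AbsComplex.IsCone.collapsibleGE (hd : 1 ≤ d) (hfin : X.faces.Finite) (hX : X.IsCone w) :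
    CollapsibleGE d X := by
  induction hn : X.faces.ncard using Nat.strong_induction_on generalizing X with
  | _ n ih =>
  by_cases hsmall : ∀ σ ∈ (X.deletion w).faces, σ.card < d
  · exact collapsibleGE_of_forall_card_le (AbsComplex.card_le_of_deletion hd hsmall)
  push Not at hsmall
  obtain ⟨σ₀, hσ₀, hσ₀d⟩ := hsmall
  obtain ⟨σ, hσ, hmax⟩ := Set.exists_max_image _ Finset.card
    (hfin.subset fun _ h => h.1) ⟨σ₀, hσ₀⟩
  have hfree := hX.isFreeFace hσ hmax
  have hlt := Set.ncard_lt_ncard hfree.collapse_faces_ssubset hfin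
  exact (hfree.collapseStepGE (hσ₀d.trans (hmax σ₀ hσ₀))).collapsibleGE
    (ih _ (hn ▸ hlt) (hfin.subset hfree.collapse_faces_ssubset.subset) (hX.collapse hσ.2 hfree) rfl)

end Cone

section Flag

variable {V : Type*} (G : SimpleGraph V)

def flagOn (S : Finset V) : AbsComplex V where
  faces := {σ | σ.Nonempty ∧ σ ⊆ S ∧ G.IsClique σ}
  nonempty_mem := fun _ h => h.1
  down_closed := fun _ _ h hsub hne =>
    ⟨hne, hsub.trans h.2.1, h.2.2.subset (Finset.coe_subset.mpr hsub)⟩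

variable {G}

lemma flagOn_univ [Fintype V] : flagOn G Finset.univ = cliqueComplex G := by
  ext σ
  simp [flagOn, cliqueComplex]

lemma flagOn_faces_finite (S : Finset V) : (flagOn G S).faces.Finite :=
  S.powerset.finite_toSet.subset fun _ hσ => Finset.mem_powerset.mpr hσ.2.1

@[simp]
lemma flagOn_singleton_faces (w : V) : (flagOn G {w}).faces = {{w}} := by
  ext σ
  simp only [flagOn, Set.mem_ofPred_eq, Set.mem_singleton_iff]
  constructor
  · rintro ⟨hne, hσ, -⟩
    exact (Finset.subset_singleton_iff.mp hσ).resolve_left hne.ne_empty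
  · rintro rfl
    simp

lemma flagOn_deletion [DecidableEq V] (S : Finset V) (v : V) :
    (flagOn G S).deletion v = flagOn G (S.erase v) := by
  ext σ
  simp only [AbsComplex.deletion, flagOn, Set.mem_ofPred_eq, Finset.subset_erase]
  tauto

lemma flagOn_link [DecidableEq V] [DecidableRel G.Adj] {S : Finset V} {v : V} (hv : v ∈ S) :
    (flagOn G S).link v = flagOn G (S.filter (G.Adj v)) := by
  ext σ
  simp only [AbsComplex.link, flagOn, Set.mem_ofPred_eq, Finset.insert_nonempty, true_and,
    Finset.insert_subset_iff, hv, Finset.coe_insert, SimpleGraph.isClique_insert]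
  constructor
  · rintro ⟨hvσ, hne, hσS, hσ, hadj⟩
    refine ⟨hne, fun x hx => Finset.mem_filter.mpr ⟨hσS hx, hadj x hx fun h => hvσ (h ▸ hx)⟩, hσ⟩
  · rintro ⟨hne, hσN, hσ⟩
    have hN : ∀ x ∈ σ, x ∈ S ∧ G.Adj v x := fun x hx => Finset.mem_filter.mp (hσN hx)
    exact ⟨fun h => G.loopless.irrefl v (hN v h).2, hne, fun x hx => (hN x hx).1, hσ,
      fun x hx _ => (hN x hx).2⟩

lemma isCone_flagOn [DecidableEq V] {S : Finset V} {w : V} (hw : w ∈ S)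
    (hadj : ∀ x ∈ S, x ≠ w → G.Adj w x) :
    (flagOn G S).IsCone w := by
  rintro σ ⟨-, hσS, hσ⟩
  refine ⟨Finset.insert_nonempty w σ, Finset.insert_subset hw hσS, ?_⟩
  rw [Finset.coe_insert]
  exact hσ.insert fun x hx hxw => hadj x (hσS hx) hxw.symm

end Flag

section NonAdjacency

variable {V : Type*} {G : SimpleGraph V} [DecidableEq V] [DecidableRel G.Adj] {S : Finset V}

lemma not_adj_trans_of_card_filter_le_two
    (hS : ∀ v ∈ S, (S.filter (¬G.Adj v ·)).card ≤ 2) {u v w : V} (hu : u ∈ S) (hv : v ∈ S)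
    (hw : w ∈ S) (huv : ¬G.Adj u v) (hvw : ¬G.Adj v w) : ¬G.Adj u w := by
  intro huw
  have hsub : ({v, u, w} : Finset V) ⊆ S.filter (¬G.Adj v ·) := by
    simp only [Finset.insert_subset_iff, Finset.singleton_subset_iff, Finset.mem_filter,
      G.irrefl, not_false_eq_true, G.adj_comm v u]
    exact ⟨⟨hv, trivial⟩, ⟨hu, huv⟩, ⟨hw, hvw⟩⟩
  have hcard : ({v, u, w} : Finset V).card = 3 :=
    Finset.card_eq_three.mpr ⟨v, u, w, fun h => hvw (h ▸ huw), fun h => huv (h ▸ huw),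
      huw.ne, rfl⟩
  have := Finset.card_le_card hsub
  have := hS v hv
  omega

lemma two_mul_card_le_of_isClique (hS : ∀ v ∈ S, (S.filter (¬G.Adj v ·)).card = 2)
    {σ : Finset V} (hσS : σ ⊆ S) (hσ : G.IsClique σ) : 2 * σ.card ≤ S.card := by
  have hdisj : (σ : Set V).PairwiseDisjoint (fun x => S.filter (¬G.Adj x ·)) := by
    intro x hx y hy hxy
    refine Finset.disjoint_left.mpr fun z hzx hzy => ?_
    simp only [Finset.mem_filter] at hzx hzy
    exact not_adj_trans_of_card_filter_le_two (fun v hv => (hS v hv).le) (hσS hx) hzx.1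
      (hσS hy) hzx.2 (by rw [G.adj_comm]; exact hzy.2) (hσ hx hy hxy)
  calc 2 * σ.card = ∑ x ∈ σ, (S.filter (¬G.Adj x ·)).card := by
        rw [Finset.sum_congr rfl fun x hx => hS x (hσS hx), Finset.sum_const, smul_eq_mul,
          mul_comm]
    _ = (σ.biUnion fun x => S.filter (¬G.Adj x ·)).card := (Finset.card_biUnion hdisj).symm
    _ ≤ S.card :=
      Finset.card_le_card (Finset.biUnion_subset.mpr fun _ _ => Finset.filter_subset _ _)

end NonAdjacency

theorem SimpleGraph.IsCompleteMultipartite.nonempty_iso_completeEquipartiteGraph {V : Type*}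
    [Finite V] {G : SimpleGraph V} {r t : ℕ} (h : G.IsCompleteMultipartite) (ht : 0 < t)
    (hpart : ∀ v, Nat.card {w // ¬G.Adj v w} = t) (hcard : Nat.card V = r * t) :
    Nonempty (G ≃g completeEquipartiteGraph r t) := by
  let π : V → Quotient h.setoid := Quotient.mk _
  have hfiber : ∀ q, Nat.card {x // π x = q} = t := by
    rintro ⟨v⟩
    rw [← hpart v]
    refine Nat.card_congr (Equiv.subtypeEquivRight fun x => ?_)
    change _ = π v ↔ _
    rw [Quotient.eq, G.adj_comm]
    rfl
  let F : ∀ q, {x // π x = q} ≃ Fin t := fun q => (Finite.equivFin _).trans (finCongr (hfiber q))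
  let e₁ : V ≃ Quotient h.setoid × Fin t :=
    (Equiv.sigmaFiberEquiv π).symm.trans (Equiv.sigmaEquivProdOfEquiv F)
  have hQ : Nat.card (Quotient h.setoid) = r := by
    have := (Nat.card_congr e₁).symm.trans hcard
    rw [Nat.card_prod, Nat.card_eq_fintype_card (α := Fin t), Fintype.card_fin] at this
    exact Nat.eq_of_mul_eq_mul_right ht this
  let e : V ≃ Fin r × Fin t :=
    e₁.trans (((Finite.equivFin _).trans (finCongr hQ)).prodCongr (Equiv.refl _))
  refine ⟨⟨e, fun {u v} => ?_⟩⟩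
  change (e u).1 ≠ (e v).1 ↔ G.Adj u v
  simp only [e, e₁, Equiv.trans_apply, Equiv.prodCongr_apply, Prod.map_fst, ne_eq,
    EmbeddingLike.apply_eq_iff_eq]
  change ¬π u = π v ↔ _
  rw [Quotient.eq]
  exact not_not

section Main

variable {V : Type*} [DecidableEq V] {G : SimpleGraph V} [DecidableRel G.Adj] {e : ℕ}

theorem collapsibleGE_succ_flagOn_of_card_filter_adj_le {S : Finset V} {v : V} (hv : v ∈ S)
    (hN : (S.filter (G.Adj v)).card ≤ 2 * e + 1)
    (hdel : CollapsibleGE (e + 1) (flagOn G (S.erase v)))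
    (hprev : 1 ≤ e → ∀ T : Finset V, T.card ≤ 2 * e + 1 → CollapsibleGE e (flagOn G T)) :
    CollapsibleGE (e + 1) (flagOn G S) := by
  rw [← flagOn_deletion] at hdel
  obtain rfl | he := Nat.eq_zero_or_pos e
  · have : Nonempty V := ⟨v⟩
    obtain ⟨w, hw⟩ := Finset.card_le_one_iff_subset_singleton.mp hN
    obtain hN₀ | hN₁ := Finset.subset_singleton_iff.mp hw
    · refine collapsibleGE_succ_of_link hdel (collapsibleGE_of_forall_card_le ?_)
      rw [flagOn_link hv, hN₀]
      exact fun σ ⟨hne, hσ, _⟩ => absurd (Finset.subset_empty.mp hσ) hne.ne_empty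
    · refine (collapseStepGE_deletion_of_link_eq_singleton (w := w) ?_).collapsibleGE hdel
      rw [flagOn_link hv, hN₁, flagOn_singleton_faces]
  · refine collapsibleGE_succ_of_link hdel ?_
    rw [flagOn_link hv]
    exact hprev he _ hN

theorem collapsibleGE_flagOn_or
    (hprev : 1 ≤ e → ∀ T : Finset V, T.card ≤ 2 * e + 1 → CollapsibleGE e (flagOn G T))
    (S : Finset V) (hS : S.card ≤ 2 * (e + 1) + 2) :
    CollapsibleGE (e + 1) (flagOn G S) ∨
      S.card = 2 * (e + 1) + 2 ∧ ∀ v ∈ S, (S.filter (¬G.Adj v ·)).card = 2 := by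
  induction S using Finset.strongInduction with
  | H S ih =>
  by_cases hcone : ∃ w ∈ S, ∀ x ∈ S, x ≠ w → G.Adj w x
  · obtain ⟨w, hw, hadj⟩ := hcone
    exact .inl ((isCone_flagOn hw hadj).collapsibleGE (by omega) (flagOn_faces_finite S))
  by_cases hthree : ∃ v ∈ S, 3 ≤ (S.filter (¬G.Adj v ·)).card
  · obtain ⟨v, hv, h3⟩ := hthree
    have hsplit := Finset.card_filter_add_card_filter_not (s := S) (G.Adj v)
    have hcard := Finset.card_erase_of_mem hv
    have hdel := (ih (S.erase v) (Finset.erase_ssubset hv) (by omega)).resolve_right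
      fun h => absurd h.1 (by omega)
    exact .inl (collapsibleGE_succ_flagOn_of_card_filter_adj_le hv (by omega) hdel hprev)
  push Not at hcone hthree
  have hpart : ∀ v ∈ S, (S.filter (¬G.Adj v ·)).card = 2 := by
    intro v hv
    obtain ⟨u, hu, huv, hnadj⟩ := hcone v hv
    have hsub : ({v, u} : Finset V) ⊆ S.filter (¬G.Adj v ·) := by
      simp [Finset.insert_subset_iff, hv, hu, hnadj]
    have := Finset.card_le_card hsub
    rw [Finset.card_pair huv.symm] at this
    have := hthree v hv
    omega
  by_cases hcard : S.card = 2 * (e + 1) + 2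
  · exact .inr ⟨hcard, hpart⟩
  · refine .inl (collapsibleGE_of_forall_card_le fun σ ⟨_, hσS, hσ⟩ => ?_)
    have := two_mul_card_le_of_isClique hpart hσS hσ
    omega

theorem collapsibleGE_flagOn_of_card_le {d : ℕ} (hd : 1 ≤ d) {S : Finset V}
    (hS : S.card ≤ 2 * d + 1) : CollapsibleGE d (flagOn G S) := by
  induction d, hd using Nat.le_induction generalizing S with
  | base =>
    exact (collapsibleGE_flagOn_or (e := 0) (fun h => absurd h (by norm_num)) S
      (by omega)).resolve_right fun h => absurd h.1 (by omega)
  | succ d _ ih =>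
    exact (collapsibleGE_flagOn_or (fun _ _ hT => ih hT) S (by omega)).resolve_right
      fun h => absurd h.1 (by omega)

end Main

lemma nonempty_iso_crossGraph {V : Type*} [Fintype V] [DecidableEq V] {G : SimpleGraph V}
    [DecidableRel G.Adj] {d : ℕ} (hcard : Fintype.card V = 2 * d + 2)
    (hpart : ∀ v, (Finset.univ.filter (¬G.Adj v ·)).card = 2) : Nonempty (G ≃g crossGraph d) := by
  have hG : G.IsCompleteMultipartite := ⟨fun u v w =>
    not_adj_trans_of_card_filter_le_two (fun v _ => (hpart v).le) (Finset.mem_univ u)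
      (Finset.mem_univ v) (Finset.mem_univ w)⟩
  exact hG.nonempty_iso_completeEquipartiteGraph two_pos
    (fun v => by rw [Nat.card_eq_fintype_card, Fintype.card_subtype, hpart v])
    (by rw [Nat.card_eq_fintype_card, hcard]; ring)

/-- for `d ≥ 1`, the boundary of the `(d+1)`-dimensional cross-polytope is
the unique non-`d`-collapsible flag complex on fewer than `2d+3` vertices; in particular
every flag complex on at most `2d+1` vertices is `d`-collapsible. -/
theorem stmt4 {V : Type*} [Fintype V] (d : ℕ) (hd : 1 ≤ d) (G : SimpleGraph V)
    (hcard : Fintype.card V < 2 * d + 3) :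
    (¬ Collapsible d (cliqueComplex G) → Nonempty (G ≃g crossGraph d)) ∧
    (Fintype.card V ≤ 2 * d + 1 → Collapsible d (cliqueComplex G)) := by
  classical
  obtain ⟨e, rfl⟩ : ∃ e, d = e + 1 := ⟨d - 1, by omega⟩
  have huniv : (Finset.univ : Finset V).card = Fintype.card V := Finset.card_univ
  refine ⟨fun hnc => ?_, fun hle => ?_⟩
  · obtain hcol | ⟨hsize, hpart⟩ := collapsibleGE_flagOn_or (G := G) (e := e)
      (fun he _ hT => collapsibleGE_flagOn_of_card_le he hT) Finset.univ (by omega)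
    · exact absurd (flagOn_univ (G := G) ▸ hcol.collapsible) hnc
    · exact nonempty_iso_crossGraph (by omega) fun v => hpart v (Finset.mem_univ v)
  · exact flagOn_univ (G := G) ▸ (collapsibleGE_flagOn_of_card_le hd (by omega)).collapsible
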